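/- Let Λ be a free abelian group of finite rank equipped with a ℤ-valued symmetric bilinear form ⟨·,·⟩. Then there exists a function ε : Λ × Λ → {±1} such that: (i) ε(α, 0) = ε(0, α) = 1 for all α; (ii) ε is a 2-cocycle: ε(α, β)·ε(α + β, γ) = ε(α, β + γ)·ε(β, γ) for all α, β, γ ∈ Λ; and (iii) its commutator satisfies ε(α, β)·ε(β, α)⁻¹ = (−1)^{⟨α,β⟩ + ⟨α,α⟩·⟨β,β⟩} for all α, β ∈ Λ. (This is the Frenkel–Kac cocycle defining the lattice vertex superalgebra structure on V_Λ, with parity p(α) = ⟨α,α⟩ mod 2.) -/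

import Mathlib

/-!
Reduced mod 2, the exponent `⟨α, β⟩ + ⟨α, α⟩⟨β, β⟩` is a `ℤ`-bilinear form on `Λ` (the parity
`α ↦ ⟨α, α⟩ mod 2` is additive because `⟨α, β⟩ + ⟨β, α⟩` is even), and it is alternating
because `n + n²` is even. On a free module every alternating form is `C - Cᵀ` for a bilinear
`C`, namely its strictly upper triangular part in a well-ordered basis. Then
`ε(α, β) = (-1)^C(α, β)` is bimultiplicative, hence a normalized 2-cocycle, and its commutator
is `(-1)^(C(α, β) - C(β, α))`.
-/

namespace Module.Basis

variable {ι R M N : Type*} [LinearOrder ι] [CommRing R] [AddCommGroup M] [Module R M]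
  [AddCommGroup N] [Module R N]

noncomputable def strictUpperPart (b : Basis ι R M) (A : M →ₗ[R] M →ₗ[R] N) :
    M →ₗ[R] M →ₗ[R] N :=
  b.constr R fun i => b.constr R fun j => if i < j then A (b i) (b j) else 0

theorem strictUpperPart_apply_basis (b : Basis ι R M) (A : M →ₗ[R] M →ₗ[R] N) (i j : ι) :
    b.strictUpperPart A (b i) (b j) = if i < j then A (b i) (b j) else 0 := by
  simp only [strictUpperPart, constr_basis]

theorem strictUpperPart_sub_flip (b : Basis ι R M) {A : M →ₗ[R] M →ₗ[R] N} (hA : A.IsAlt) :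
    b.strictUpperPart A - (b.strictUpperPart A).flip = A := by
  refine b.ext fun i => b.ext fun j => ?_
  simp only [LinearMap.sub_apply, LinearMap.flip_apply, strictUpperPart_apply_basis]
  rcases lt_trichotomy i j with h | rfl | h
  · simp [h, h.not_gt]
  · simp [hA.self_eq_zero]
  · simp [h, h.not_gt, hA.neg]

end Module.Basis

theorem LinearMap.IsAlt.exists_sub_flip_eq {R M N : Type*} [CommRing R] [AddCommGroup M]
    [Module R M] [Module.Free R M] [AddCommGroup N] [Module R N] {A : M →ₗ[R] M →ₗ[R] N}
    (hA : A.IsAlt) : ∃ C : M →ₗ[R] M →ₗ[R] N, C - C.flip = A := by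
  let := IsWellOrder.linearOrder (WellOrderingRel (α := Module.Free.ChooseBasisIndex R M))
  exact ⟨_, (Module.Free.chooseBasis R M).strictUpperPart_sub_flip hA⟩

namespace LinearMap.BilinForm

variable {Λ : Type*} [AddCommGroup Λ] (B : LinearMap.BilinForm ℤ Λ) (hB : B.IsSymm)

def parity : Λ →ₗ[ℤ] ZMod 2 :=
  AddMonoidHom.toIntLinearMap
    { toFun := fun α => (B α α : ZMod 2)
      map_zero' := by simp
      map_add' := fun α β => by
        have hexpand : B (α + β) (α + β) = B α α + B β β + 2 * B α β := by
          simp only [map_add, LinearMap.add_apply, hB.eq β α]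
          ring
        simp only [hexpand, Int.cast_add, Int.cast_mul, Int.cast_ofNat, CharTwo.two_eq_zero,
          zero_mul, add_zero] }

def frenkelKacForm : Λ →ₗ[ℤ] Λ →ₗ[ℤ] ZMod 2 :=
  B.compr₂ (Int.castAddHom (ZMod 2)).toIntLinearMap +
    (LinearMap.mul ℤ (ZMod 2)).compl₁₂ (parity B hB) (parity B hB)

theorem frenkelKacForm_apply (α β : Λ) :
    frenkelKacForm B hB α β = ((B α β + B α α * B β β : ℤ) : ZMod 2) := by
  simp [frenkelKacForm, parity]

theorem isAlt_frenkelKacForm : (frenkelKacForm B hB).IsAlt := fun α => by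
  rw [frenkelKacForm_apply, Int.cast_add, Int.cast_mul]
  generalize ((B α α : ℤ) : ZMod 2) = x
  revert x; decide

end LinearMap.BilinForm

theorem exists_frenkel_kac_cocycle_general
    (Λ : Type*) [AddCommGroup Λ] [Module.Free ℤ Λ]
    (B : LinearMap.BilinForm ℤ Λ) (hB : B.IsSymm) :
    ∃ ε : Λ → Λ → ℤˣ,
      (∀ α : Λ, ε α 0 = 1 ∧ ε 0 α = 1) ∧
      (∀ α β γ : Λ, ε α β * ε (α + β) γ = ε α (β + γ) * ε β γ) ∧
      (∀ α β : Λ, ε α β * (ε β α)⁻¹ = (-1 : ℤˣ) ^ (B α β + B α α * B β β)) := by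
  obtain ⟨C, hC⟩ := (B.isAlt_frenkelKacForm hB).exists_sub_flip_eq
  -- `Additive ℤˣ` is a `ZMod 2`-module, so `ℤˣ` has powers with exponents in `ZMod 2`.
  refine ⟨fun α β => (-1 : ℤˣ) ^ C α β, fun α => ?_, fun α β γ => ?_, fun α β => ?_⟩
  · simp
  · simp only [map_add, LinearMap.add_apply, uzpow_add, mul_assoc]
  · have hαβ : C α β - C β α = B.frenkelKacForm hB α β := by rw [← hC]; rfl
    rw [← uzpow_neg, ← uzpow_add, ← sub_eq_add_neg, hαβ, LinearMap.BilinForm.frenkelKacForm_apply,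
      uzpow_intCast]

/-- **Existence of the Frenkel–Kac 2-cocycle.** Let `Λ` be a free abelian group of finite
rank with a `ℤ`-valued symmetric bilinear form `⟨·,·⟩`.  Then there is a map
`ε : Λ × Λ → {±1}` with `ε(α, 0) = ε(0, α) = 1`, satisfying the 2-cocycle identity
`ε(α, β)·ε(α + β, γ) = ε(α, β + γ)·ε(β, γ)`, and whose commutator is
`ε(α, β)·ε(β, α)⁻¹ = (−1)^{⟨α,β⟩ + ⟨α,α⟩·⟨β,β⟩}`.  This cocycle defines the lattice
vertex superalgebra structure on `V_Λ` with parity `p(α) = ⟨α,α⟩ mod 2`. -/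
theorem exists_frenkel_kac_cocycle
    (Λ : Type*) [AddCommGroup Λ] [Module.Free ℤ Λ] [Module.Finite ℤ Λ]
    (B : LinearMap.BilinForm ℤ Λ) (hB : B.IsSymm) :
    ∃ ε : Λ → Λ → ℤˣ,
      (∀ α : Λ, ε α 0 = 1 ∧ ε 0 α = 1) ∧
      (∀ α β γ : Λ, ε α β * ε (α + β) γ = ε α (β + γ) * ε β γ) ∧
      (∀ α β : Λ, ε α β * (ε β α)⁻¹ = (-1 : ℤˣ) ^ (B α β + B α α * B β β)) :=
  exists_frenkel_kac_cocycle_general Λ B hB
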